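/- If f is an edge coloring of K_m (m ≥ 2) using x colors and every edge of K_m is satisfied by f (i.e., f is a conflict-free edge coloring of K_m) where additionally all m vertices have the same palette under f, then m ≤ x + 1. -/
import Mathlib


/-- The palette of a vertex `v` under an edge coloring `f` of `K_m`. -/
def palette {m : ℕ} {C : Type*} (f : (⊤ : SimpleGraph (Fin m)).edgeSet → C) (v : Fin m) :
    Set C :=
  {c | ∃ e : (⊤ : SimpleGraph (Fin m)).edgeSet, v ∈ (e : Sym2 (Fin m)) ∧ f e = c}

/-- If a conflict-free edge coloring of `K_m` (`m ≥ 2`) uses `x` colors and all vertices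
have the same palette, then `m ≤ x + 1`. -/
theorem equal_palettes_conflict_free_bound (m x : ℕ) (hm : 2 ≤ m) {C : Type*} [Fintype C]
    (hC : Fintype.card C = x) (f : (⊤ : SimpleGraph (Fin m)).edgeSet → C)
    (hsat : ∀ e : (⊤ : SimpleGraph (Fin m)).edgeSet, ∃ c : C,
      ∃! e' : (⊤ : SimpleGraph (Fin m)).edgeSet,
        (∃ w : Fin m, w ∈ (e : Sym2 (Fin m)) ∧ w ∈ (e' : Sym2 (Fin m))) ∧ f e' = c)
    (hpal : ∀ u v : Fin m, palette f u = palette f v) :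
    m ≤ x + 1 := by
  -- Key: for each edge e, the color witnessing satisfaction is f e itself.
  have key : ∀ e : (⊤ : SimpleGraph (Fin m)).edgeSet,
      ∃! e' : (⊤ : SimpleGraph (Fin m)).edgeSet,
        (∃ w : Fin m, w ∈ (e : Sym2 (Fin m)) ∧ w ∈ (e' : Sym2 (Fin m))) ∧ f e' = f e := by
    intro e
    obtain ⟨c, e', ⟨⟨w, hwe, hwe'⟩, hfc⟩, huniq⟩ := hsat e
    obtain ⟨⟨a, b⟩, hE⟩ := Quot.exists_rep (e : Sym2 (Fin m))
    have hE : (e : Sym2 (Fin m)) = s(a, b) := hE.symm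
    have hab : a ≠ b := by
      have := e.2
      rw [hE] at this
      simpa using this
    have ha : a ∈ (e : Sym2 (Fin m)) := by rw [hE]; exact Sym2.mem_mk_left a b
    have hb : b ∈ (e : Sym2 (Fin m)) := by rw [hE]; exact Sym2.mem_mk_right a b
    have hca : c ∈ palette f a := by
      rw [hpal a w]; exact ⟨e', hwe', hfc⟩
    have hcb : c ∈ palette f b := by
      rw [hpal b w]; exact ⟨e', hwe', hfc⟩
    obtain ⟨ea, haea, hfa⟩ := hca
    obtain ⟨eb, hbeb, hfb⟩ := hcb
    have h1 : ea = e' := huniq ea ⟨⟨a, ha, haea⟩, hfa⟩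
    have h2 : eb = e' := huniq eb ⟨⟨b, hb, hbeb⟩, hfb⟩
    have hbea : b ∈ (ea : Sym2 (Fin m)) := by rw [h1, ← h2]; exact hbeb
    have heq : (ea : Sym2 (Fin m)) = s(a, b) :=
      (Sym2.mem_and_mem_iff hab).mp ⟨haea, hbea⟩
    have hea_e : ea = e := Subtype.ext (by rw [heq, hE])
    have hfe : f e = c := by rw [← hea_e]; exact hfa
    rw [hfe]
    exact ⟨e', ⟨⟨w, hwe, hwe'⟩, hfc⟩, huniq⟩
  -- Fix a vertex and map the other vertices to the colors of their edges to it.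
  have hm0 : 0 < m := by omega
  set v0 : Fin m := ⟨0, hm0⟩ with hv0
  have hedge : ∀ u : {u : Fin m // u ≠ v0}, s(v0, (u : Fin m)) ∈
      (⊤ : SimpleGraph (Fin m)).edgeSet := by
    intro u
    simp [Ne.symm u.2]
  let g : {u : Fin m // u ≠ v0} → C := fun u => f ⟨s(v0, (u : Fin m)), hedge u⟩
  have hginj : Function.Injective g := by
    intro u1 u2 hgu
    obtain ⟨e', _, huniq⟩ := key ⟨s(v0, (u1 : Fin m)), hedge u1⟩
    have h1 : (⟨s(v0, (u1 : Fin m)), hedge u1⟩ :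
        (⊤ : SimpleGraph (Fin m)).edgeSet) = e' :=
      huniq _ ⟨⟨v0, Sym2.mem_mk_left _ _, Sym2.mem_mk_left _ _⟩, rfl⟩
    have h2 : (⟨s(v0, (u2 : Fin m)), hedge u2⟩ :
        (⊤ : SimpleGraph (Fin m)).edgeSet) = e' :=
      huniq _ ⟨⟨v0, Sym2.mem_mk_left _ _, Sym2.mem_mk_left _ _⟩, hgu.symm⟩
    have : s(v0, (u1 : Fin m)) = s(v0, (u2 : Fin m)) := by
      have := h1.trans h2.symm
      exact congrArg Subtype.val this
    exact Subtype.ext (Sym2.congr_right.mp this)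
  have hcard : Fintype.card {u : Fin m // u ≠ v0} ≤ Fintype.card C :=
    Fintype.card_le_of_injective g hginj
  have hcard' : Fintype.card {u : Fin m // u ≠ v0} = m - 1 := by
    rw [Fintype.card_subtype_compl, Fintype.card_fin, Fintype.card_subtype_eq]
  omega
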